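/- arXiv:1507.05212 — 5 statements merged into one kernel-verified Lean document; each statement's English description precedes it below -/
import Mathlib

section
/- A finite module M over a ring R with identity is not cyclic if and only if there exist proper nonzero submodules E_1, ..., E_r of M whose union equals M. -/
/-!
A cyclic module `R x` is not a union of proper submodules, since the submodule containing `x`
is everything. Conversely, a module that is not cyclic is the union of its cyclic submodules
`R x`, `x ≠ 0`, all of which are then proper and nonzero; when `M` is finite there are only
finitely many of them.
-/

namespace Submodule

variable {R M : Type*} [Ring R] [AddCommGroup M] [Module R M]

theorem eq_top_of_mem_of_span_singleton_eq_top {N : Submodule R M} {x : M}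
    (hx : span R {x} = ⊤) (hxN : x ∈ N) : N = ⊤ :=
  top_le_iff.mp (hx ▸ (span_singleton_le_iff_mem x N).mpr hxN)

theorem span_singleton_ne_top_of_iUnion_eq_univ {ι : Type*} {E : ι → Submodule R M}
    (htop : ∀ i, E i ≠ ⊤) (hcov : ⋃ i, (E i : Set M) = Set.univ) (x : M) :
    span R {x} ≠ ⊤ := by
  intro hx
  obtain ⟨i, hxi⟩ := Set.mem_iUnion.mp (hcov.symm ▸ Set.mem_univ x)
  exact htop i (eq_top_of_mem_of_span_singleton_eq_top hx hxi)

theorem nontrivial_of_span_singleton_ne_top (h : ∀ x : M, span R {x} ≠ ⊤) : Nontrivial M := by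
  by_contra hM
  rw [not_nontrivial_iff_subsingleton] at hM
  exact h 0 (eq_top_iff.mpr fun y _ => Subsingleton.elim (0 : M) y ▸ zero_mem _)

theorem iUnion_span_singleton_ne_zero [Nontrivial M] :
    ⋃ x : {x : M // x ≠ 0}, (span R {(x : M)} : Set M) = Set.univ := by
  refine Set.eq_univ_of_forall fun y => Set.mem_iUnion.mpr ?_
  by_cases hy : y = 0
  · obtain ⟨x, hx⟩ := exists_ne (0 : M)
    exact ⟨⟨x, hx⟩, hy ▸ zero_mem (span R {x})⟩
  · exact ⟨⟨y, hy⟩, mem_span_singleton_self y⟩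

end Submodule

/-- A finite module `M` over a ring `R` with identity is not cyclic if and only if
there exist proper nonzero submodules `E_1, …, E_r` of `M` whose union is `M`. -/
theorem not_cyclic_iff_union_of_proper_submodules
    (R : Type*) (M : Type*) [Ring R] [AddCommGroup M] [Module R M] [Finite M] :
    ¬(∃ x : M, Submodule.span R {x} = ⊤) ↔
      ∃ (r : ℕ) (E : Fin r → Submodule R M),
        (∀ i, E i ≠ ⊥) ∧ (∀ i, E i ≠ ⊤) ∧ (⋃ i, (E i : Set M)) = Set.univ := by
  constructor
  · intro h
    rw [not_exists] at h
    have := Submodule.nontrivial_of_span_singleton_ne_top h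
    let e := (Finite.equivFin {x : M // x ≠ 0}).symm
    refine ⟨_, fun i => Submodule.span R {(e i : M)}, fun i => ?_, fun i => h _, ?_⟩
    · exact Submodule.span_singleton_eq_bot.not.mpr (e i).2
    · rw [e.surjective.iUnion_comp fun x => (Submodule.span R {(x : M)} : Set M)]
      exact Submodule.iUnion_span_singleton_ne_zero
  · rintro ⟨r, E, -, htop, hcov⟩
    exact not_exists.mpr (Submodule.span_singleton_ne_top_of_iUnion_eq_univ htop hcov)
end

section
/- The Cauchy binomial theorem: for any commutative ring element x and nonnegative integer t, the product over i from 0 to t-1 of (1 + x q^i) equals the sum over i from 0 to t of q^{binom(i,2)} binom(t,i)_q x^i. -/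
/-!
Writing `P_t(x) = ∏_{i<t} (1 + x q^i)`, splitting off the factor `i = 0` gives
`P_{t+1}(x) = (1 + x) P_t(q x)`. The right-hand side `S_t(x)` satisfies the same recursion:
comparing coefficients of `x^(k+1)`, this is exactly the q-Pascal rule
`[t+1, k+1]_q = [t, k]_q + q^(k+1) [t, k+1]_q` defining `qBinom`, once one uses
`binom(k+1, 2) = binom(k, 2) + k`.
-/

def qBinom {K : Type*} [CommRing K] (q : K) : ℕ → ℕ → K
  | _, 0 => 1
  | 0, _ + 1 => 0
  | n + 1, k + 1 => qBinom q n k + q ^ (k + 1) * qBinom q n (k + 1)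

open Finset

section

variable {K : Type*} [CommRing K]

@[simp]
theorem qBinom_zero_right (q : K) (n : ℕ) : qBinom q n 0 = 1 := by
  cases n <;> rfl

theorem qBinom_succ_succ (q : K) (n k : ℕ) :
    qBinom q (n + 1) (k + 1) = qBinom q n k + q ^ (k + 1) * qBinom q n (k + 1) := rfl

theorem qBinom_eq_zero_of_lt (q : K) : ∀ {n k : ℕ}, n < k → qBinom q n k = 0
  | 0, _ + 1, _ => rfl
  | n + 1, k + 1, h => by
    rw [qBinom_succ_succ, qBinom_eq_zero_of_lt q (by omega : n < k),
      qBinom_eq_zero_of_lt q (by omega : n < k + 1), mul_zero, add_zero]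

theorem prod_range_succ_one_add_mul_pow (q x : K) (t : ℕ) :
    ∏ i ∈ range (t + 1), (1 + x * q ^ i) = (1 + x) * ∏ i ∈ range t, (1 + x * q * q ^ i) := by
  rw [prod_range_succ', pow_zero, mul_one, mul_comm]
  congr 1
  exact prod_congr rfl fun i _ ↦ by ring

theorem sum_range_qBinom_succ (q x : K) (t : ℕ) :
    ∑ i ∈ range (t + 2), q ^ i.choose 2 * qBinom q (t + 1) i * x ^ i =
      (1 + x) * ∑ i ∈ range (t + 1), q ^ i.choose 2 * qBinom q t i * (x * q) ^ i := by
  set g : ℕ → K := fun i ↦ q ^ i.choose 2 * qBinom q t i * (x * q) ^ i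
  have pascal (i : ℕ) :
      q ^ (i + 1).choose 2 * qBinom q (t + 1) (i + 1) * x ^ (i + 1) = x * g i + g (i + 1) := by
    simp only [g, qBinom_succ_succ, Nat.choose_succ_succ', Nat.choose_one_right]
    ring
  have g_last : g (t + 1) = 0 := by simp [g, qBinom_eq_zero_of_lt q (Nat.lt_succ_self t)]
  calc ∑ i ∈ range (t + 2), q ^ i.choose 2 * qBinom q (t + 1) i * x ^ i
      = x * ∑ i ∈ range (t + 1), g i + (∑ i ∈ range (t + 1), g (i + 1) + g 0) := by
        rw [sum_range_succ', sum_congr rfl fun i _ ↦ pascal i, sum_add_distrib, mul_sum,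
          add_assoc]
        simp [g]
    _ = (1 + x) * ∑ i ∈ range (t + 1), g i := by
        rw [← sum_range_succ' g, sum_range_succ g (t + 1), g_last]
        ring

end

/-- The Cauchy binomial theorem:
`∏_{i=0}^{t-1} (1 + x q^i) = ∑_{i=0}^{t} q^(binom(i,2)) [t, i]_q x^i`. -/
theorem cauchy_binomial {K : Type*} [CommRing K] (q x : K) (t : ℕ) :
    ∏ i ∈ Finset.range t, (1 + x * q ^ i) =
      ∑ i ∈ Finset.range (t + 1), q ^ (i.choose 2) * qBinom q t i * x ^ i := by
  induction t generalizing x with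
  | zero => simp
  | succ t ih => rw [prod_range_succ_one_add_mul_pow, ih, sum_range_qBinom_succ]
end

section
/- If V_1,...,V_s and U_1,...,U_t are cyclic submodules of a finite module W such that there exist nonzero complex coefficients a_i, b_j with the identity a_1·1_{V_1} + ... + a_s·1_{V_s} = b_1·1_{U_1} + ... + b_t·1_{U_t} of functions on W, where all V_i are pairwise distinct, all U_j are pairwise distinct, and no V_i equals any U_j, then s = t = 0; i.e., any such solution with only cyclic modules is trivial. -/
namespace Submodule

variable {R W ι : Type*} [Semiring R] [AddCommMonoid W] [Module R W]

/-- In a finite injective family of cyclic submodules, a generator of a maximal member lies in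
no other member. -/
theorem exists_existsUnique_mem_of_span_singleton [Finite ι] [Nonempty ι]
    {M : ι → Submodule R W} (hinj : Function.Injective M)
    (hcyc : ∀ k, ∃ x : W, span R {x} = M k) :
    ∃ x : W, ∃! k, x ∈ M k := by
  obtain ⟨k, -, hmax⟩ := Set.finite_univ.exists_maximalFor M Set.univ Set.univ_nonempty
  obtain ⟨x, hx⟩ := hcyc k
  have hxk : x ∈ M k := hx ▸ mem_span_singleton_self x
  refine ⟨x, k, hxk, fun j (hj : x ∈ M j) => ?_⟩
  have hkj : M k ≤ M j := hx ▸ (span_singleton_le_iff_mem x (M j)).mpr hj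
  exact hinj (le_antisymm (hmax (Set.mem_univ j) hkj) hkj)

theorem isEmpty_of_sum_mul_indicator_eq_zero {S : Type*} [NonAssocSemiring S] [Fintype ι]
    (M : ι → Submodule R W) (c : ι → S) (hc : ∀ k, c k ≠ 0)
    (hcyc : ∀ k, ∃ x : W, span R {x} = M k) (hinj : Function.Injective M)
    (h0 : ∀ w : W, ∑ k, c k * (M k : Set W).indicator (fun _ => (1 : S)) w = 0) :
    IsEmpty ι := by
  by_contra hne
  have : Nonempty ι := not_isEmpty_iff.mp hne
  obtain ⟨x, k, hxk, huniq⟩ := exists_existsUnique_mem_of_span_singleton hinj hcyc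
  have hsum : ∑ j, c j * (M j : Set W).indicator (fun _ => (1 : S)) x = c k :=
    (Fintype.sum_eq_single k fun j hj => by
      rw [Set.indicator_of_notMem (fun hx => hj (huniq j hx)), mul_zero]).trans
      (by rw [Set.indicator_of_mem hxk, mul_one])
  exact hc k (hsum.symm.trans (h0 x))

end Submodule

theorem cyclic_solution_trivial_general
    {R W : Type*} [Ring R] [AddCommGroup W] [Module R W]
    {s t : ℕ} (V : Fin s → Submodule R W) (U : Fin t → Submodule R W)
    (a : Fin s → ℂ) (b : Fin t → ℂ)
    (ha : ∀ i, a i ≠ 0) (hb : ∀ j, b j ≠ 0)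
    (hVcyc : ∀ i, ∃ x : W, Submodule.span R {x} = V i)
    (hUcyc : ∀ j, ∃ x : W, Submodule.span R {x} = U j)
    (hVinj : Function.Injective V) (hUinj : Function.Injective U)
    (hVU : ∀ i j, V i ≠ U j)
    (heq : ∀ w : W,
      ∑ i, a i * (V i : Set W).indicator (fun _ => (1 : ℂ)) w =
      ∑ j, b j * (U j : Set W).indicator (fun _ => (1 : ℂ)) w) :
    s = 0 ∧ t = 0 := by
  have hE : IsEmpty (Fin s ⊕ Fin t) :=
    Submodule.isEmpty_of_sum_mul_indicator_eq_zero (Sum.elim V U) (Sum.elim a (-b))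
      (by rintro (i | j) <;> simp [ha, hb]) (by rintro (i | j) <;> simp [hVcyc, hUcyc])
      (hVinj.sumElim hUinj hVU)
      (fun w => by simp [Fintype.sum_sum_type, heq w])
  obtain ⟨hs, ht⟩ := isEmpty_sum.mp hE
  exact ⟨(Fintype.card_fin s).symm.trans Fintype.card_eq_zero,
    (Fintype.card_fin t).symm.trans Fintype.card_eq_zero⟩

/-- A solution of the isometry equation involving only cyclic submodules of a finite
module is trivial: if `∑ a_i 1_{V_i} = ∑ b_j 1_{U_j}` with nonzero complex coefficients,
all `V_i` pairwise distinct, all `U_j` pairwise distinct, no `V_i` equal to any `U_j`,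
and all modules cyclic, then both sides are empty. -/
theorem cyclic_solution_trivial
    {R W : Type*} [Ring R] [AddCommGroup W] [Module R W] [Finite W]
    {s t : ℕ} (V : Fin s → Submodule R W) (U : Fin t → Submodule R W)
    (a : Fin s → ℂ) (b : Fin t → ℂ)
    (ha : ∀ i, a i ≠ 0) (hb : ∀ j, b j ≠ 0)
    (hVcyc : ∀ i, ∃ x : W, Submodule.span R {x} = V i)
    (hUcyc : ∀ j, ∃ x : W, Submodule.span R {x} = U j)
    (hVinj : Function.Injective V) (hUinj : Function.Injective U)
    (hVU : ∀ i j, V i ≠ U j)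
    (heq : ∀ w : W,
      ∑ i, a i * (V i : Set W).indicator (fun _ => (1 : ℂ)) w =
      ∑ j, b j * (U j : Set W).indicator (fun _ => (1 : ℂ)) w) :
    s = 0 ∧ t = 0 :=
  cyclic_solution_trivial_general V U a b ha hb hVcyc hUcyc hVinj hUinj hVU heq
end

section
/- Let R be a ring with identity, A a finite left R-module, and C an (n,k)_A MDS code with k = 1. Then every Hamming-weight-preserving R-module homomorphism f : C → A^n extends to a monomial map of A^n. -/
/-!
For `k = 1` no permutation is needed. Since every nonzero codeword has full weight, each
coordinate projection `C → A` is injective, hence bijective because `|C| = |A|`; the same holds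
for the coordinates of `f`, which preserves weights. Composing the inverse of the `i`-th
projection of `C` with the `i`-th coordinate of `f` gives the automorphism `g i`.
-/

section

variable {ι R M A : Type*} [Fintype ι] [Ring R] [AddCommGroup M] [Module R M]
  [AddCommGroup A] [Module R A]

theorem hammingNorm_eq_card_iff [DecidableEq A] {x : ι → A} :
    hammingNorm x = Fintype.card ι ↔ ∀ i, x i ≠ 0 := by
  rw [hammingNorm, ← Finset.card_univ, Finset.card_filter_eq_iff]
  simp

theorem LinearMap.proj_comp_injective_of_hammingNorm_eq_card [DecidableEq A]
    (φ : M →ₗ[R] ι → A) (hφ : ∀ m, m ≠ 0 → hammingNorm (φ m) = Fintype.card ι) (i : ι) :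
    Function.Injective (LinearMap.proj i ∘ₗ φ) := by
  rw [← LinearMap.ker_eq_bot, LinearMap.ker_eq_bot']
  intro m hm
  by_contra hne
  exact hammingNorm_eq_card_iff.mp (hφ m hne) i hm

noncomputable def LinearMap.coordEquivOfHammingNormEqCard [Finite A] [DecidableEq A]
    (φ : M →ₗ[R] ι → A) (hφ : ∀ m, m ≠ 0 → hammingNorm (φ m) = Fintype.card ι)
    (hcard : Nat.card M = Nat.card A) (i : ι) : M ≃ₗ[R] A :=
  LinearEquiv.ofBijective (LinearMap.proj i ∘ₗ φ) <|
    (Nat.bijective_iff_injective_and_card _).mpr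
      ⟨φ.proj_comp_injective_of_hammingNorm_eq_card hφ i, hcard⟩

@[simp]
theorem LinearMap.coordEquivOfHammingNormEqCard_apply [Finite A] [DecidableEq A]
    (φ : M →ₗ[R] ι → A) (hφ : ∀ m, m ≠ 0 → hammingNorm (φ m) = Fintype.card ι)
    (hcard : Nat.card M = Nat.card A) (i : ι) (m : M) :
    φ.coordEquivOfHammingNormEqCard hφ hcard i m = φ m i :=
  rfl

end

/-- Extension theorem for `(n,1)_A` MDS codes: if `C ⊆ A^n` is an `R`-submodule with
`|C| = |A|` and minimum Hamming distance `n`, then every Hamming-weight-preserving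
`R`-linear map `f : C → A^n` extends to a monomial map of `A^n`. -/
theorem mds_dim_one_extension
    {R A : Type*} [Ring R] [AddCommGroup A] [Module R A] [Finite A] [DecidableEq A]
    {n : ℕ} (C : Submodule R (Fin n → A))
    (hcard : Nat.card C = Nat.card A)
    (hdist : ∀ c : C, c ≠ 0 → hammingNorm (c : Fin n → A) = n)
    (f : C →ₗ[R] (Fin n → A))
    (hf : ∀ c : C, hammingNorm (f c) = hammingNorm (c : Fin n → A)) :
    ∃ (π : Equiv.Perm (Fin n)) (g : Fin n → (A ≃ₗ[R] A)),
      ∀ c : C, f c = fun i => g i ((c : Fin n → A) (π i)) := by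
  have hC : ∀ c : C, c ≠ 0 → hammingNorm (C.subtype c) = Fintype.card (Fin n) := by
    simpa using hdist
  have hfC : ∀ c : C, c ≠ 0 → hammingNorm (f c) = Fintype.card (Fin n) := fun c hc => by
    simpa [hf c] using hdist c hc
  let e := C.subtype.coordEquivOfHammingNormEqCard hC hcard
  let q := f.coordEquivOfHammingNormEqCard hfC hcard
  refine ⟨1, fun i => (e i).symm.trans (q i), fun c => funext fun i => ?_⟩
  have hc : (e i).symm ((c : Fin n → A) i) = c := (e i).symm_apply_eq.mpr rfl
  simp only [LinearEquiv.trans_apply, hc, Equiv.Perm.one_apply, q,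
    LinearMap.coordEquivOfHammingNormEqCard_apply]
end

section
/- Let R = M_m(F_q) and let A = M_{m×k}(F_q) with k ≤ m, considered as a left R-module. Then A has the extension property: for every n and every R-submodule C ⊆ A^n, each Hamming isometry f ∈ Hom_R(C, A^n) extends to a monomial map. -/
/-!
View the code through two `R`-linear maps `u v : C → A^n`, the inclusion and the isometry.
Equal Hamming weights say that every `c` has as many zero coordinates under `u` as under `v`.
Writing the indicator of `a = 0` as the character sum `|A|⁻¹ ∑_Y ψ (tr (Y a))` (for a primitive
additive character `ψ` of `F_q`) turns this into an identity between two sums of characters of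
`C`, so by linear independence of characters each `c ↦ ψ (tr (Y' v_j c))` equals some
`c ↦ ψ (tr (Y u_i c))`. Primitivity of `ψ` and `R`-linearity upgrade this to
`u_i c * Y = v_j c * Y'`, and choosing `Y'` right invertible (possible exactly when `k ≤ m`)
gives `v_j = u_i * Q`. For `j` with minimal kernel, matching back in the other direction shows
`ker u_i = ker v_j`; then `Q` is injective on the row space of the image of `u_i`, extends to an
invertible matrix, and right multiplication by it is an automorphism of `A`. Removing the
matched pair of coordinates and inducting on `n` produces the monomial map.
-/

section

variable {F : Type*} [Field F] {m k : ℕ}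

/-- Left action of the matrix ring `M_m(F)` on `m × k` matrices by matrix multiplication. -/
instance matrixSMul : SMul (Matrix (Fin m) (Fin m) F) (Matrix (Fin m) (Fin k) F) :=
  ⟨fun r a => r * a⟩

instance matrixMulAction :
    MulAction (Matrix (Fin m) (Fin m) F) (Matrix (Fin m) (Fin k) F) where
  one_smul := Matrix.one_mul
  mul_smul := Matrix.mul_assoc

instance matrixDistribMulAction :
    DistribMulAction (Matrix (Fin m) (Fin m) F) (Matrix (Fin m) (Fin k) F) where
  smul_zero := Matrix.mul_zero
  smul_add := Matrix.mul_add

/-- The left `M_m(F)`-module structure on `A = M_{m×k}(F)`. -/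
instance matrixModule :
    Module (Matrix (Fin m) (Fin m) F) (Matrix (Fin m) (Fin k) F) where
  add_smul := Matrix.add_mul
  zero_smul := Matrix.zero_mul

section Characters

open Finset

theorem AddChar.sum_mul_inv_apply {G τ : Type*} [AddCommGroup G] [Fintype G] [Fintype τ]
    (w : τ → AddChar G ℂ) (χ : AddChar G ℂ) :
    ∑ x, (∑ t, w t x) * χ⁻¹ x = #{t | w t = χ} * Fintype.card G := by
  classical
  simp_rw [sum_mul, ← AddChar.mul_apply]
  rw [sum_comm]
  simp_rw [AddChar.sum_eq_ite, ← AddChar.one_eq_zero, mul_inv_eq_one]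
  rw [sum_ite, sum_const_zero, add_zero, sum_const, nsmul_eq_mul]

theorem AddChar.exists_eq_of_forall_sum_apply_eq {G ι κ : Type*} [AddCommGroup G] [Finite G]
    [Fintype ι] [Fintype κ] (u : ι → AddChar G ℂ) (v : κ → AddChar G ℂ)
    (huv : ∀ x, ∑ i, u i x = ∑ j, v j x) (j : κ) : ∃ i, u i = v j := by
  classical
  have := Fintype.ofFinite G
  have hpair := AddChar.sum_mul_inv_apply v (v j)
  simp_rw [← huv, AddChar.sum_mul_inv_apply u (v j)] at hpair
  by_contra! hne
  simp [filter_false_of_mem fun i _ => hne i] at hpair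
  exact hpair rfl

end Characters

namespace MatrixModuleExtension

open Matrix Finset

section Monomial

theorem card_filter_eq_zero_eq_card_sub_hammingNorm {ι β : Type*} [Fintype ι] [Zero β]
    [DecidableEq β] (x : ι → β) :
    #{i | x i = 0} = Fintype.card ι - hammingNorm x := by
  have : #{i | x i = 0} + hammingNorm x = Fintype.card ι :=
    card_filter_add_card_filter_not _
  omega

theorem hammingNorm_eq_add_hammingNorm_comp_succAbove {β : Type*} [Zero β] [DecidableEq β]
    {N : ℕ} (x : Fin (N + 1) → β) (i : Fin (N + 1)) :
    hammingNorm x = (if x i ≠ 0 then 1 else 0) + hammingNorm (x ∘ i.succAbove) := by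
  simp only [hammingNorm, card_filter, Fin.sum_univ_succAbove _ i, Function.comp_apply]

variable {R C A : Type*} [Semiring R] [AddCommMonoid C] [Module R C] [AddCommMonoid A]
  [Module R A] [DecidableEq A]

theorem exists_monomial_of_exists_matched_pair
    (hmatch : ∀ (N : ℕ) (u v : C →ₗ[R] Fin (N + 1) → A),
      (∀ c, hammingNorm (u c) = hammingNorm (v c)) →
      ∃ (i j : Fin (N + 1)) (g : A ≃ₗ[R] A), ∀ c, v c j = g (u c i))
    {N : ℕ} (u v : C →ₗ[R] Fin N → A) (huv : ∀ c, hammingNorm (u c) = hammingNorm (v c)) :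
    ∃ (π : Equiv.Perm (Fin N)) (g : Fin N → A ≃ₗ[R] A),
      ∀ c, v c = fun j => g j (u c (π j)) := by
  induction N with
  | zero => exact ⟨1, finZeroElim, fun c => funext finZeroElim⟩
  | succ N ih =>
    obtain ⟨i, j, g, hg⟩ := hmatch N u v huv
    have hw : ∀ c, hammingNorm (LinearMap.funLeft R A i.succAbove (u c))
        = hammingNorm (LinearMap.funLeft R A j.succAbove (v c)) := by
      intro c
      have h := huv c
      rw [hammingNorm_eq_add_hammingNorm_comp_succAbove (u c) i,
        hammingNorm_eq_add_hammingNorm_comp_succAbove (v c) j] at h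
      simp only [hg c, ne_eq, LinearEquiv.map_eq_zero_iff] at h
      exact Nat.add_left_cancel h
    obtain ⟨π, g', hπ⟩ := ih (LinearMap.funLeft R A i.succAbove ∘ₗ u)
      (LinearMap.funLeft R A j.succAbove ∘ₗ v) hw
    refine ⟨(finSuccEquiv' j).trans ((Equiv.optionCongr π).trans (finSuccEquiv' i).symm),
      Fin.insertNth j g g', fun c => funext fun j' => ?_⟩
    induction j' using Fin.succAboveCases j with
    | x => simp [finSuccEquiv'_at, finSuccEquiv'_symm_none, hg]
    | p t => simpa [finSuccEquiv'_succAbove] using congrFun (hπ c) t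

end Monomial

section TraceCharacter

variable {S M ι κ : Type*} [CommRing S] [CommMonoid M] [Fintype ι] [Fintype κ]

def traceChar (ψ : AddChar S M) (Y : Matrix ι κ S) : AddChar (Matrix κ ι S) M where
  toFun a := ψ (Y * a).trace
  map_zero_eq_one' := by simp
  map_add_eq_mul' a b := by simp [Matrix.mul_add, AddChar.map_add_eq_mul]

@[simp]
theorem traceChar_apply (ψ : AddChar S M) (Y : Matrix ι κ S) (a : Matrix κ ι S) :
    traceChar ψ Y a = ψ (Y * a).trace :=
  rfl

theorem traceChar_injective {ψ : AddChar S M} (hψ : ψ.IsPrimitive) :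
    Function.Injective (traceChar ψ : Matrix ι κ S → AddChar (Matrix κ ι S) M) := by
  intro Y Y' h
  rw [Matrix.ext_iff_trace_mul_right]
  intro a
  apply AddChar.to_mulShift_inj_of_isPrimitive hψ
  ext x
  simpa [mul_comm x] using DFunLike.congr_fun h (x • a)

theorem sum_traceChar_apply {M : Type*} [CommRing M] [IsDomain M] [Fintype S] [DecidableEq S]
    [DecidableEq ι] [DecidableEq κ] {ψ : AddChar S M} (hψ : ψ.IsPrimitive) (a : Matrix κ ι S) :
    ∑ Y : Matrix ι κ S, traceChar ψ Y a
      = if a = 0 then (Fintype.card (Matrix ι κ S) : M) else 0 := by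
  have hswap : ∀ Y : Matrix ι κ S, traceChar ψ Y a = traceChar ψ a Y := fun Y => by
    simp [Matrix.trace_mul_comm Y a]
  have hzero : traceChar ψ a = 0 ↔ a = 0 := by
    have h0 : traceChar ψ (0 : Matrix κ ι S) = 0 := by ext; simp
    rw [← h0, (traceChar_injective hψ).eq_iff]
  simp_rw [hswap, AddChar.sum_eq_ite, hzero]

theorem sum_sum_traceChar_apply {M : Type*} [CommRing M] [IsDomain M] [Fintype S] [DecidableEq S]
    [DecidableEq ι] [DecidableEq κ] {ψ : AddChar S M} (hψ : ψ.IsPrimitive) {τ : Type*}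
    [Fintype τ] (x : τ → Matrix κ ι S) :
    ∑ t, ∑ Y : Matrix ι κ S, traceChar ψ Y (x t)
      = ((Fintype.card τ - hammingNorm x : ℕ) : M) * Fintype.card (Matrix ι κ S) := by
  simp_rw [sum_traceChar_apply hψ]
  rw [sum_ite, sum_const_zero, add_zero, sum_const, nsmul_eq_mul,
    card_filter_eq_zero_eq_card_sub_hammingNorm]

end TraceCharacter

section MatrixModule

theorem smul_def (r : Matrix (Fin m) (Fin m) F) (a : Matrix (Fin m) (Fin k) F) : r • a = r * a :=
  rfl

theorem mul_eq_mul_of_traceChar_apply_eq {M : Type*} [CommMonoid M] {ψ : AddChar F M}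
    (hψ : ψ.IsPrimitive) {C : Type*} [AddCommMonoid C] [Module (Matrix (Fin m) (Fin m) F) C]
    {ν ν' : C →ₗ[Matrix (Fin m) (Fin m) F] Matrix (Fin m) (Fin k) F}
    {Y Y' : Matrix (Fin k) (Fin m) F} (h : ∀ c, traceChar ψ Y (ν c) = traceChar ψ Y' (ν' c))
    (c : C) : ν c * Y = ν' c * Y' := by
  apply traceChar_injective hψ
  ext s
  have hcycle : ∀ (Z : Matrix (Fin k) (Fin m) F) (a : Matrix (Fin m) (Fin k) F),
      (Z * (s * a)).trace = (a * Z * s).trace := fun Z a => by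
    rw [trace_mul_comm, Matrix.mul_assoc, trace_mul_comm]
  have := h (s • c)
  rwa [ν.map_smul, ν'.map_smul, smul_def, smul_def, traceChar_apply, traceChar_apply, hcycle,
    hcycle] at this

theorem exists_coord_mul_eq_coord_mul [Fintype F] [DecidableEq F] {ψ : AddChar F ℂ}
    (hψ : ψ.IsPrimitive)
    {C : Type*} [AddCommGroup C] [Module (Matrix (Fin m) (Fin m) F) C] [Finite C] {N : ℕ}
    (u v : C →ₗ[Matrix (Fin m) (Fin m) F] Fin N → Matrix (Fin m) (Fin k) F)
    (huv : ∀ c, hammingNorm (u c) = hammingNorm (v c)) (j : Fin N)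
    (Y' : Matrix (Fin k) (Fin m) F) :
    ∃ (i : Fin N) (Y : Matrix (Fin k) (Fin m) F), ∀ c, u c i * Y = v c j * Y' := by
  let χ (w : C →ₗ[Matrix (Fin m) (Fin m) F] Fin N → Matrix (Fin m) (Fin k) F)
      (p : Fin N × Matrix (Fin k) (Fin m) F) : AddChar C ℂ :=
    (traceChar ψ p.2).compAddMonoidHom ((Pi.evalAddMonoidHom _ p.1).comp w.toAddMonoidHom)
  have hχ : ∀ c, ∑ p, χ u p c = ∑ p, χ v p c := fun c => by
    change ∑ p : Fin N × Matrix (Fin k) (Fin m) F, traceChar ψ p.2 (u c p.1)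
      = ∑ p : Fin N × Matrix (Fin k) (Fin m) F, traceChar ψ p.2 (v c p.1)
    rw [Fintype.sum_prod_type, Fintype.sum_prod_type, sum_sum_traceChar_apply hψ,
      sum_sum_traceChar_apply hψ, huv c]
  obtain ⟨⟨i, Y⟩, h⟩ := AddChar.exists_eq_of_forall_sum_apply_eq (χ u) (χ v) hχ (j, Y')
  refine ⟨i, Y, mul_eq_mul_of_traceChar_apply_eq hψ (ν := LinearMap.proj i ∘ₗ u)
    (ν' := LinearMap.proj j ∘ₗ v) fun c => ?_⟩
  exact DFunLike.congr_fun h c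

theorem exists_mul_eq_one_of_le {S : Type*} [Semiring S] (hk : k ≤ m) :
    ∃ (Y : Matrix (Fin k) (Fin m) S) (Z : Matrix (Fin m) (Fin k) S), Y * Z = 1 :=
  ⟨(1 : Matrix (Fin m) (Fin m) S).submatrix (Fin.castLE hk) id,
    (1 : Matrix (Fin m) (Fin m) S).submatrix id (Fin.castLE hk), by
    rw [← Matrix.submatrix_mul _ _ _ _ _ Function.bijective_id, Matrix.one_mul,
      Matrix.submatrix_one _ (Fin.castLE_injective hk)]⟩

/-- The space of rows of the matrices in `D`. -/
def rowSubspace (D : Submodule (Matrix (Fin m) (Fin m) F) (Matrix (Fin m) (Fin k) F)) :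
    Submodule F (Fin k → F) where
  carrier := {w | replicateRow (Fin m) w ∈ D}
  add_mem' {v w} hv hw := by
    change replicateRow (Fin m) (v + w) ∈ D
    exact replicateRow_add v w ▸ D.add_mem hv hw
  zero_mem' := D.zero_mem
  smul_mem' x w hw := by
    have hx : x • replicateRow (Fin m) w
        = (x • 1 : Matrix (Fin m) (Fin m) F) • replicateRow (Fin m) w := by
      rw [smul_def, Matrix.smul_mul, Matrix.one_mul]
    change replicateRow (Fin m) (x • w) ∈ D
    exact (replicateRow_smul x w).symm ▸ hx ▸ D.smul_mem _ hw

theorem row_mem_rowSubspace {D : Submodule (Matrix (Fin m) (Fin m) F) (Matrix (Fin m) (Fin k) F)}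
    {X : Matrix (Fin m) (Fin k) F} (hX : X ∈ D) (r : Fin m) : X r ∈ rowSubspace D := by
  have hr : replicateRow (Fin m) (Pi.single r (1 : F)) • X = replicateRow (Fin m) (X r) := by
    ext i j
    simp [smul_def, Matrix.mul_apply, Pi.single_apply]
  change replicateRow (Fin m) (X r) ∈ D
  exact hr ▸ D.smul_mem _ hX

theorem replicateRow_mul {ι n o α : Type*} [Fintype n] [NonUnitalNonAssocSemiring α]
    (w : n → α) (Q : Matrix n o α) : replicateRow ι w * Q = replicateRow ι (w ᵥ* Q) :=
  rfl

def rowLinearEquiv (T : (Fin k → F) ≃ₗ[F] (Fin k → F)) :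
    Matrix (Fin m) (Fin k) F ≃ₗ[Matrix (Fin m) (Fin m) F] Matrix (Fin m) (Fin k) F where
  toFun X := fun r => T (X r)
  invFun X := fun r => T.symm (X r)
  map_add' X X' := by funext r; exact map_add T (X r) (X' r)
  map_smul' s X := by
    funext r
    change T ((s * X) r) = (s * Matrix.of fun r => T (X r)) r
    simp only [mul_apply_eq_vecMul, vecMul_eq_sum, map_sum, map_smul]
    rfl
  left_inv X := by funext r; simp
  right_inv X := by funext r; simp

theorem exists_linearEquiv_apply_eq_mul {C : Type*} [AddCommMonoid C]
    [Module (Matrix (Fin m) (Fin m) F) C]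
    (ν : C →ₗ[Matrix (Fin m) (Fin m) F] Matrix (Fin m) (Fin k) F) (Q : Matrix (Fin k) (Fin k) F)
    (hQ : ∀ c, ν c * Q = 0 → ν c = 0) :
    ∃ g : Matrix (Fin m) (Fin k) F ≃ₗ[Matrix (Fin m) (Fin m) F] Matrix (Fin m) (Fin k) F,
      ∀ c, g (ν c) = ν c * Q := by
  rcases isEmpty_or_nonempty (Fin m) with hm | hm
  · exact ⟨LinearEquiv.refl _ _, fun c => Subsingleton.elim _ _⟩
  let θ := Q.vecMulLinear.domRestrict (rowSubspace (LinearMap.range ν))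
  have hθ : Function.Injective θ := by
    rw [injective_iff_map_eq_zero]
    rintro ⟨w, c, hc⟩ hw
    have hw : w ᵥ* Q = 0 := hw
    have : replicateRow (Fin m) w = 0 := by
      rw [← hc]
      exact hQ c (by rw [hc, replicateRow_mul, hw, replicateRow_zero])
    exact Subtype.ext (by simpa using this)
  obtain ⟨T, hT⟩ := Submodule.exists_linearEquiv_restrict_eq (LinearEquiv.ofInjective θ hθ)
  refine ⟨rowLinearEquiv T, fun c => ?_⟩
  funext r
  exact (hT ⟨ν c r, row_mem_rowSubspace (LinearMap.mem_range_self ν c) r⟩).symm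

theorem exists_coord_eq_coord_mul [Fintype F] [DecidableEq F] (hk : k ≤ m) {C : Type*}
    [AddCommGroup C] [Module (Matrix (Fin m) (Fin m) F) C] [Finite C] {N : ℕ}
    (u v : C →ₗ[Matrix (Fin m) (Fin m) F] Fin N → Matrix (Fin m) (Fin k) F)
    (huv : ∀ c, hammingNorm (u c) = hammingNorm (v c)) (j : Fin N) :
    ∃ (i : Fin N) (Q : Matrix (Fin k) (Fin k) F), ∀ c, v c j = u c i * Q := by
  obtain ⟨Y₀, Z, hYZ⟩ := exists_mul_eq_one_of_le (S := F) hk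
  obtain ⟨i, Y, hY⟩ := exists_coord_mul_eq_coord_mul
    (AddChar.FiniteField.primitiveChar_to_Complex_isPrimitive F) u v huv j Y₀
  exact ⟨i, Y * Z, fun c => by rw [← Matrix.mul_one (v c j), ← hYZ, ← Matrix.mul_assoc, ← hY,
    Matrix.mul_assoc]⟩

theorem exists_matched_pair [Fintype F] [DecidableEq F] (hk : k ≤ m) {C : Type*}
    [AddCommGroup C] [Module (Matrix (Fin m) (Fin m) F) C] [Finite C] {N : ℕ}
    (u v : C →ₗ[Matrix (Fin m) (Fin m) F] Fin (N + 1) → Matrix (Fin m) (Fin k) F)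
    (huv : ∀ c, hammingNorm (u c) = hammingNorm (v c)) :
    ∃ (i j : Fin (N + 1))
      (g : Matrix (Fin m) (Fin k) F ≃ₗ[Matrix (Fin m) (Fin m) F] Matrix (Fin m) (Fin k) F),
      ∀ c, v c j = g (u c i) := by
  obtain ⟨j, -, hj⟩ := univ.exists_minimalFor (fun j => {c | v c j = 0}) univ_nonempty
  obtain ⟨i, Q, hQ⟩ := exists_coord_eq_coord_mul hk u v huv j
  obtain ⟨j', Q', hQ'⟩ := exists_coord_eq_coord_mul hk v u (fun c => (huv c).symm) i
  have hker : {c | v c j' = 0} ≤ {c | v c j = 0} := fun c (hc : v c j' = 0) => by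
    change v c j = 0
    rw [hQ c, hQ' c, hc, Matrix.zero_mul, Matrix.zero_mul]
  obtain ⟨g, hg⟩ := exists_linearEquiv_apply_eq_mul (LinearMap.proj i ∘ₗ u) Q fun c hc => by
    have hvj' : v c j' = 0 := hj (mem_univ j') hker ((hQ c).trans hc)
    change u c i = 0
    rw [hQ' c, hvj', Matrix.zero_mul]
  exact ⟨i, j, g, fun c => (hQ c).trans (hg c).symm⟩

end MatrixModule

end MatrixModuleExtension

/-- Extension theorem for matrix module alphabets: for `R = M_m(F_q)` and
`A = M_{m×k}(F_q)` with `k ≤ m`, the alphabet `A` has the extension property: every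
Hamming isometry of an `R`-submodule code `C ⊆ A^n` extends to a monomial map. -/
theorem matrix_module_extension_property
    [Fintype F] [DecidableEq F] (hk : k ≤ m) {n : ℕ}
    (C : Submodule (Matrix (Fin m) (Fin m) F) (Fin n → Matrix (Fin m) (Fin k) F))
    (f : C →ₗ[Matrix (Fin m) (Fin m) F] (Fin n → Matrix (Fin m) (Fin k) F))
    (hf : ∀ c : C, hammingNorm (f c) = hammingNorm (c : Fin n → Matrix (Fin m) (Fin k) F)) :
    ∃ (π : Equiv.Perm (Fin n))
      (g : Fin n → (Matrix (Fin m) (Fin k) F ≃ₗ[Matrix (Fin m) (Fin m) F]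
        Matrix (Fin m) (Fin k) F)),
      ∀ c : C, f c = fun i => g i ((c : Fin n → Matrix (Fin m) (Fin k) F) (π i)) :=
  MatrixModuleExtension.exists_monomial_of_exists_matched_pair
    (fun _ u v huv => MatrixModuleExtension.exists_matched_pair hk u v huv)
    C.subtype f fun c => (hf c).symm

end
end
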